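/- For a state ρ = (1−p)|ψ⟩⟨ψ| + (p/d)I with |ψ⟩ a unit vector in ℂ^d, the quantum Fisher information for a generator G satisfies F_Φ = [(1−p)²/(1−p+2p/d)]·4(⟨ψ|G²|ψ⟩ − ⟨ψ|G|ψ⟩²) when restricted to the leading 2-dimensional coherence block, i.e., the depolarized QFI equals the pure-state QFI times (1−p)²/(1−p+2p/d). -/

import Mathlib

open scoped InnerProductSpace

/-- For ρ = (1−p)|ψ⟩⟨ψ| + (p/d)I on ℂ^d, with eigenvalues λ₀ = 1−p+p/d on |ψ⟩
and λ = p/d on the orthogonal complement, the mixed-state QFI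
F = 2∑_{i,j} (λ_i−λ_j)²/(λ_i+λ_j)·|⟨i|G|j⟩|² equals the pure-state QFI
4·Var_ψ(G) times the suppression factor (1−p)²/(1−p+2p/d). -/
theorem depolarized_qfi (d : ℕ) (hd : 2 ≤ d) (p : ℝ) (hp0 : 0 ≤ p) (hp1 : p < 1)
    (b : OrthonormalBasis (Fin d) ℂ (EuclideanSpace ℂ (Fin d)))
    (G : EuclideanSpace ℂ (Fin d) →ₗ[ℂ] EuclideanSpace ℂ (Fin d))
    (hG : ∀ x y, ⟪G x, y⟫_ℂ = ⟪x, G y⟫_ℂ) :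
    let i0 : Fin d := ⟨0, by omega⟩
    let ψ := b i0
    let lam : Fin d → ℝ := fun i => if i = i0 then 1 - p + p / d else p / d
    2 * ∑ i, ∑ j, ((lam i - lam j) ^ 2 / (lam i + lam j))
        * ‖⟪b i, G (b j)⟫_ℂ‖ ^ 2
      = ((1 - p) ^ 2 / (1 - p + 2 * p / d))
          * (4 * ((⟪ψ, G (G ψ)⟫_ℂ).re - ((⟪ψ, G ψ⟫_ℂ).re) ^ 2)) := by
  intro i0 ψ lam
  have hdpos : (0:ℝ) < d := by
    have : (2:ℝ) ≤ d := by exact_mod_cast hd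
    linarith
  have h1p : (0:ℝ) < 1 - p := by linarith
  set c : ℝ := (1 - p) ^ 2 / (1 - p + 2 * p / d) with hc
  set f : Fin d → ℝ := fun j => ‖⟪b j, G ψ⟫_ℂ‖ ^ 2 with hf
  have hsym : ∀ x y : EuclideanSpace ℂ (Fin d), ‖⟪x, G y⟫_ℂ‖ = ‖⟪y, G x⟫_ℂ‖ := by
    intro x y
    rw [← hG y x, ← inner_conj_symm, RCLike.norm_conj]
  have hfrac : (1 - p + p / d - p / d) ^ 2 / (1 - p + p / d + p / d) = c := by
    rw [hc]; ring_nf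
  have key : ∀ i j : Fin d, ((lam i - lam j) ^ 2 / (lam i + lam j))
      * ‖⟪b i, G (b j)⟫_ℂ‖ ^ 2
      = if i = i0 then (if j = i0 then 0 else c * f j)
        else (if j = i0 then c * f i else 0) := by
    intro i j
    by_cases hi : i = i0 <;> by_cases hj : j = i0
    · subst hi hj; simp [lam]
    · subst hi
      rw [if_pos rfl, if_neg hj]
      simp only [lam, if_pos rfl, if_neg hj]
      rw [hfrac, hf]
      rw [hsym]
    · subst hj
      rw [if_neg hi, if_pos rfl]
      simp only [lam, if_pos rfl, if_neg hi]
      have : (p / d - (1 - p + p / d)) ^ 2 / (p / d + (1 - p + p / d)) = c := by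
        rw [hc]; ring_nf
      rw [this, hf]
    · rw [if_neg hi, if_neg hj]
      simp only [lam, if_neg hi, if_neg hj]
      simp
  have hsum : ∑ i, ∑ j, ((lam i - lam j) ^ 2 / (lam i + lam j))
      * ‖⟪b i, G (b j)⟫_ℂ‖ ^ 2
      = 2 * (c * ∑ j ∈ ({i0} : Finset (Fin d))ᶜ, f j) := by
    simp only [key]
    rw [← Finset.sum_compl_add_sum {i0}]
    simp only [Finset.sum_singleton, if_pos rfl, if_true]
    have h1 : ∑ i ∈ ({i0} : Finset (Fin d))ᶜ, ∑ j, (if i = i0 then (if j = i0 then 0 else c * f j)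
        else (if j = i0 then c * f i else 0)) = ∑ i ∈ ({i0} : Finset (Fin d))ᶜ, c * f i := by
      refine Finset.sum_congr rfl fun i hi => ?_
      have hi' : i ≠ i0 := by simpa using hi
      rw [Finset.sum_eq_single i0]
      · rw [if_neg hi', if_pos rfl]
      · intro j _ hj
        rw [if_neg hi', if_neg hj]
      · simp
    have h2 : ∑ j, (if j = i0 then (0:ℝ) else c * f j)
        = ∑ j ∈ ({i0} : Finset (Fin d))ᶜ, c * f j := by
      rw [← Finset.sum_compl_add_sum {i0}, Finset.sum_singleton, if_pos rfl, add_zero]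
      exact Finset.sum_congr rfl fun j hj => if_neg (by simpa using hj)
    rw [h1, h2, Finset.mul_sum]
    ring
  have hpar : ∑ j, f j = (⟪ψ, G (G ψ)⟫_ℂ).re := by
    have h := b.sum_inner_mul_inner (G ψ) (G ψ)
    rw [hG] at h
    have h' := congrArg Complex.re h
    rw [Complex.re_sum] at h'
    rw [← h']
    refine Finset.sum_congr rfl fun j _ => ?_
    show ‖⟪b j, G ψ⟫_ℂ‖ ^ 2 = _
    rw [← inner_conj_symm (G ψ) (b j), mul_comm, Complex.mul_conj, Complex.ofReal_re,
      Complex.sq_norm]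
  have hreal : (⟪ψ, G ψ⟫_ℂ).im = 0 := by
    have h2 : (starRingEnd ℂ) ⟪ψ, G ψ⟫_ℂ = ⟪ψ, G ψ⟫_ℂ := by
      rw [inner_conj_symm, hG]
    exact Complex.conj_eq_iff_im.mp h2
  have hfi0 : f i0 = ((⟪ψ, G ψ⟫_ℂ).re) ^ 2 := by
    have : ‖⟪ψ, G ψ⟫_ℂ‖ ^ 2 = (⟪ψ, G ψ⟫_ℂ).re ^ 2 + (⟪ψ, G ψ⟫_ℂ).im ^ 2 := by
      rw [Complex.sq_norm, Complex.normSq_apply]; ring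
    rw [hf]
    show ‖⟪ψ, G ψ⟫_ℂ‖ ^ 2 = _
    rw [this, hreal]; ring
  have hS : ∑ j ∈ ({i0} : Finset (Fin d))ᶜ, f j
      = (⟪ψ, G (G ψ)⟫_ℂ).re - ((⟪ψ, G ψ⟫_ℂ).re) ^ 2 := by
    rw [Finset.compl_eq_univ_sdiff, Finset.sum_sdiff_eq_sub (Finset.subset_univ _),
      Finset.sum_singleton, hpar, hfi0]
  rw [hsum, hS]
  ring
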